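/- Let R be a commutative ring and consider W_{D_n} = R[T]/(T^{n+1}). The diagram with first map μ : W_{D_n} → W_{D_{n+1}} ⊗ W_{D_n} induced by T ↦ S ⊗ T (where W_{D_{n+1}} = R[S]/(S^{n+2})), followed by the two parallel maps W_{D_{n+1}} ⊗ W_{D_n} → W_{D_{n+1}} ⊗ W_{D_{n+1}} ⊗ W_{D_n} given by (a ⊗ b) ↦ Δ(a) ⊗ b (with Δ induced by S ↦ S_1 S_2) and (a ⊗ b) ↦ a ⊗ μ'(b) (with μ' induced by T ↦ S_2 T), is an equalizer diagram in commutative R-algebras. -/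

import Mathlib

set_option synthInstance.maxHeartbeats 1000000
set_option maxHeartbeats 1000000

/-- The Weil algebra `W_{D_n} = R[T]/(T^{n+1})`. -/
abbrev WeilDn (R : Type*) [CommRing R] (n : ℕ) : Type _ :=
  Polynomial R ⧸ Ideal.span {(Polynomial.X : Polynomial R) ^ (n + 1)}

/-- `W_{D_{n+1}} ⊗ W_{D_n}`, presented as `R[S,T]/(S^{n+2}, T^{n+1})` with
`S = X 0`, `T = X 1`. -/
abbrev WeilTwo (R : Type*) [CommRing R] (n : ℕ) : Type _ :=
  MvPolynomial (Fin 2) R ⧸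
    Ideal.span {(MvPolynomial.X 0 : MvPolynomial (Fin 2) R) ^ (n + 2),
      (MvPolynomial.X 1 : MvPolynomial (Fin 2) R) ^ (n + 1)}

/-- `W_{D_{n+1}} ⊗ W_{D_{n+1}} ⊗ W_{D_n}`, presented as
`R[S₁,S₂,T]/(S₁^{n+2}, S₂^{n+2}, T^{n+1})` with `S₁ = X 0`, `S₂ = X 1`, `T = X 2`. -/
abbrev WeilThree (R : Type*) [CommRing R] (n : ℕ) : Type _ :=
  MvPolynomial (Fin 3) R ⧸
    Ideal.span {(MvPolynomial.X 0 : MvPolynomial (Fin 3) R) ^ (n + 2),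
      (MvPolynomial.X 1 : MvPolynomial (Fin 3) R) ^ (n + 2),
      (MvPolynomial.X 2 : MvPolynomial (Fin 3) R) ^ (n + 1)}


/-!
Every element of these algebras has a unique representative supported on the box of exponents
`S^a T^b` with `a ≤ n + 1`, `b ≤ n` (respectively `S₁^a S₂^b T^c` with `a, b ≤ n + 1`, `c ≤ n`),
and all maps in the diagram act on monomials by linear maps of exponents:
`μ (T^k) = S^k T^k`, `f₁ (S^a T^b) = S₁^a S₂^a T^b` and `f₂ (S^a T^b) = S₁^a S₂^b T^b`.
So `μ` is injective with image spanned by the diagonal monomials `S^k T^k`. The exponent maps of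
`f₁` and `f₂` are injective and their images meet only in the images of diagonal exponents, so
comparing the coefficients of `f₁ b` and `f₂ b` at `S₁^a S₂^a T^b` shows that `f₁ b = f₂ b` kills
every off-diagonal coefficient of `b`.
-/

namespace MvPolynomial

open Finsupp

variable {R σ τ : Type*} [CommRing R]

theorem mem_span_X_pow_iff (e : σ → ℕ) (q : MvPolynomial σ R) :
    q ∈ Ideal.span (Set.range fun i => (X i : MvPolynomial σ R) ^ e i) ↔
      ∀ d : σ →₀ ℕ, (∀ i, d i < e i) → coeff d q = 0 := by
  have : Set.range (fun i => (X i : MvPolynomial σ R) ^ e i) =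
      (fun s => monomial s (1 : R)) '' Set.range fun i => single i (e i) := by
    simp only [← Set.range_comp, Function.comp_def, X_pow_eq_monomial]
  rw [this, mem_ideal_span_monomial_image]
  simp only [Set.exists_range_iff, single_le_iff]
  refine forall_congr' fun d => ?_
  rw [← not_imp_not, notMem_support_iff]
  simp only [not_exists, not_le]

theorem mem_span_X_pow_pair_iff (a b : ℕ) (q : MvPolynomial (Fin 2) R) :
    q ∈ Ideal.span {X 0 ^ a, X 1 ^ b} ↔ ∀ d : Fin 2 →₀ ℕ, d 0 < a → d 1 < b → coeff d q = 0 := by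
  have : ({X 0 ^ a, X 1 ^ b} : Set (MvPolynomial (Fin 2) R)) =
      Set.range fun i => X i ^ ![a, b] i := by
    simp [Set.range, Fin.exists_fin_two, Set.ext_iff, eq_comm]
  simp [this, mem_span_X_pow_iff, Fin.forall_fin_two]

theorem mem_span_X_pow_triple_iff (a b c : ℕ) (q : MvPolynomial (Fin 3) R) :
    q ∈ Ideal.span {X 0 ^ a, X 1 ^ b, X 2 ^ c} ↔
      ∀ d : Fin 3 →₀ ℕ, d 0 < a → d 1 < b → d 2 < c → coeff d q = 0 := by
  have : ({X 0 ^ a, X 1 ^ b, X 2 ^ c} : Set (MvPolynomial (Fin 3) R)) =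
      Set.range fun i => X i ^ ![a, b, c] i := by
    simp [Set.range, Fin.exists_fin_succ, Set.ext_iff, eq_comm]
  simp [this, mem_span_X_pow_iff, Fin.forall_fin_succ]

theorem X_mul_X_eq_monomial (i j : σ) :
    (X i * X j : MvPolynomial σ R) = monomial (single i 1 + single j 1) 1 := by
  rw [X, X, monomial_mul, one_mul]

theorem coeff_sum_monomial_of_injective {ι : Type*} [DecidableEq ι] (s : Finset ι)
    {E : ι → τ →₀ ℕ} (hE : Function.Injective E) (c : ι → R) (i : ι) :
    coeff (E i) (∑ j ∈ s, monomial (E j) (c j)) = if i ∈ s then c i else 0 := by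
  classical
  simp only [coeff_sum, coeff_monomial, hE.eq_iff, Finset.sum_ite_eq']

theorem coeff_sum_monomial_of_notMem_range {ι : Type*} (s : Finset ι) {E : ι → τ →₀ ℕ}
    (c : ι → R) {e : τ →₀ ℕ} (he : e ∉ Set.range E) :
    coeff e (∑ j ∈ s, monomial (E j) (c j)) = 0 := by
  classical
  refine (coeff_sum _ _ _).trans (Finset.sum_eq_zero fun j _ => ?_)
  rw [coeff_monomial, if_neg fun h => he ⟨j, h⟩]

theorem aeval_monomial_one (v : σ → τ →₀ ℕ) (q : MvPolynomial σ R) :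
    aeval (fun i => monomial (v i) (1 : R)) q =
      ∑ d ∈ q.support, monomial (linearCombination ℕ v d) (coeff d q) := by
  conv_lhs => rw [q.as_sum]
  refine (map_sum _ _ _).trans (Finset.sum_congr rfl fun d _ => ?_)
  simp only [aeval_monomial, monomial_pow, one_pow, linearCombination_apply,
    monomial_finsupp_sum_index, algebraMap_eq]

theorem coeff_aeval_monomial_one_of_injective {v : σ → τ →₀ ℕ}
    (hv : Function.Injective (linearCombination ℕ v)) (q : MvPolynomial σ R) (d : σ →₀ ℕ) :
    coeff (linearCombination ℕ v d) (aeval (fun i => monomial (v i) (1 : R)) q) = coeff d q := by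
  classical
  rw [aeval_monomial_one, coeff_sum_monomial_of_injective _ hv, ite_eq_left_iff]
  exact fun hd => (notMem_support_iff.mp hd).symm

theorem coeff_aeval_monomial_one_of_notMem_range {v : σ → τ →₀ ℕ} (q : MvPolynomial σ R)
    {e : τ →₀ ℕ} (he : e ∉ Set.range (linearCombination ℕ v)) :
    coeff e (aeval (fun i => monomial (v i) (1 : R)) q) = 0 := by
  rw [aeval_monomial_one, coeff_sum_monomial_of_notMem_range _ _ he]

theorem polynomial_aeval_monomial_one (u : σ →₀ ℕ) (p : Polynomial R) :
    Polynomial.aeval (monomial u (1 : R)) p = ∑ k ∈ p.support, monomial (k • u) (p.coeff k) := by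
  simp only [Polynomial.aeval_def, Polynomial.eval₂_eq_sum, Polynomial.sum_def, monomial_pow,
    one_pow, algebraMap_eq, C_mul_monomial, mul_one]

theorem coeff_polynomial_aeval_monomial_one_nsmul {u : σ →₀ ℕ} (hu : u ≠ 0) (p : Polynomial R)
    (k : ℕ) : coeff (k • u) (Polynomial.aeval (monomial u (1 : R)) p) = p.coeff k := by
  obtain ⟨i, hi⟩ := Finsupp.ne_iff.mp hu
  have hinj : Function.Injective fun k : ℕ => k • u := fun k l hkl =>
    Nat.eq_of_mul_eq_mul_right (Nat.pos_of_ne_zero hi) (by simpa using DFunLike.congr_fun hkl i)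
  rw [polynomial_aeval_monomial_one, coeff_sum_monomial_of_injective _ hinj, ite_eq_left_iff]
  exact fun hk => (Polynomial.notMem_support_iff.mp hk).symm

theorem coeff_polynomial_aeval_monomial_one_of_notMem_range {u : σ →₀ ℕ} (p : Polynomial R)
    {e : σ →₀ ℕ} (he : e ∉ Set.range fun k : ℕ => k • u) :
    coeff e (Polynomial.aeval (monomial u (1 : R)) p) = 0 := by
  rw [polynomial_aeval_monomial_one, coeff_sum_monomial_of_notMem_range _ _ he]

end MvPolynomial

namespace Ideal.Quotient

variable {R A : Type*} [CommRing R] [CommRing A] [Algebra R A] {J : Ideal A}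

theorem mvPolynomial_algHom_mk {σ : Type*} {I : Ideal (MvPolynomial σ R)}
    (g : MvPolynomial σ R ⧸ I →ₐ[R] A ⧸ J) {w : σ → A} (hg : ∀ i, g (mk I (.X i)) = mk J (w i))
    (q : MvPolynomial σ R) : g (mk I q) = mk J (MvPolynomial.aeval w q) :=
  AlgHom.congr_fun (MvPolynomial.algHom_ext (f := g.comp (mkₐ R I))
    (g := (mkₐ R J).comp (MvPolynomial.aeval w)) fun i => by simpa using hg i) q

theorem polynomial_algHom_mk {I : Ideal (Polynomial R)} (g : Polynomial R ⧸ I →ₐ[R] A ⧸ J)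
    {a : A} (hg : g (mk I .X) = mk J a) (p : Polynomial R) :
    g (mk I p) = mk J (Polynomial.aeval a p) :=
  AlgHom.congr_fun (Polynomial.algHom_ext (f := g.comp (mkₐ R I))
    (g := (mkₐ R J).comp (Polynomial.aeval a)) (by simpa using hg)) p

end Ideal.Quotient

namespace WeilDn

open MvPolynomial Finsupp

variable {R : Type*} [CommRing R]

-- The exponent vectors of `S T`, of `f₁ S = S₁ S₂, f₁ T = T`, and of `f₂ S = S₁, f₂ T = S₂ T`.
noncomputable def mulExp : Fin 2 →₀ ℕ := single 0 1 + single 1 1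

noncomputable def mulFstExp : Fin 2 → Fin 3 →₀ ℕ := ![single 0 1 + single 1 1, single 2 1]

noncomputable def mulSndExp : Fin 2 → Fin 3 →₀ ℕ := ![single 0 1, single 1 1 + single 2 1]

theorem mulExp_ne_zero : mulExp ≠ 0 :=
  Finsupp.ne_iff.mpr ⟨0, by simp [mulExp]⟩

@[simp]
theorem nsmul_mulExp_apply (k : ℕ) (i : Fin 2) : (k • mulExp) i = k := by
  fin_cases i <;> simp [mulExp]

@[simp]
theorem linearCombination_mulFstExp_apply (d : Fin 2 →₀ ℕ) (j : Fin 3) :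
    linearCombination ℕ mulFstExp d j = d (![0, 0, 1] j) := by
  fin_cases j <;> simp [mulFstExp, linearCombination_apply, sum_fintype]

@[simp]
theorem linearCombination_mulSndExp_apply (d : Fin 2 →₀ ℕ) (j : Fin 3) :
    linearCombination ℕ mulSndExp d j = d (![0, 1, 1] j) := by
  fin_cases j <;> simp [mulSndExp, linearCombination_apply, sum_fintype]

theorem linearCombination_mulFstExp_injective :
    Function.Injective (linearCombination ℕ mulFstExp) := fun d d' h => by
  ext i
  fin_cases i
  · simpa using DFunLike.congr_fun h 0
  · simpa using DFunLike.congr_fun h 2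

theorem linearCombination_mulFstExp_notMem_range {d : Fin 2 →₀ ℕ} (hd : d 0 ≠ d 1) :
    linearCombination ℕ mulFstExp d ∉ Set.range (linearCombination ℕ mulSndExp) := by
  rintro ⟨d', h⟩
  have h0 := DFunLike.congr_fun h 0
  have h1 := DFunLike.congr_fun h 1
  have h2 := DFunLike.congr_fun h 2
  simp at h0 h1 h2
  omega

theorem eq_nsmul_mulExp {d : Fin 2 →₀ ℕ} (hd : d 0 = d 1) : d = d 0 • mulExp := by
  ext i
  fin_cases i <;> simp [hd]

theorem notMem_range_nsmul_mulExp {d : Fin 2 →₀ ℕ} (hd : d 0 ≠ d 1) :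
    d ∉ Set.range fun k : ℕ => k • mulExp := by
  rintro ⟨k, rfl⟩
  simp at hd

theorem X_pow_dvd_of_aeval_mulExp_mem {n : ℕ} {p : Polynomial R}
    (hp : Polynomial.aeval (monomial mulExp (1 : R)) p ∈
      Ideal.span {X 0 ^ (n + 2), X 1 ^ (n + 1)}) :
    Polynomial.X ^ (n + 1) ∣ p := by
  rw [mem_span_X_pow_pair_iff] at hp
  refine Polynomial.X_pow_dvd_iff.mpr fun k hk => ?_
  rw [← coeff_polynomial_aeval_monomial_one_nsmul mulExp_ne_zero p k]
  exact hp _ (by simp; omega) (by simpa using hk)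

theorem coeff_eq_zero_of_aeval_sub_aeval_mem {n : ℕ} {q : MvPolynomial (Fin 2) R}
    (hq : aeval (fun i => monomial (mulFstExp i) (1 : R)) q -
        aeval (fun i => monomial (mulSndExp i) (1 : R)) q ∈
      Ideal.span {X 0 ^ (n + 2), X 1 ^ (n + 2), X 2 ^ (n + 1)})
    {d : Fin 2 →₀ ℕ} (h0 : d 0 < n + 2) (h1 : d 1 < n + 1) (hd : d 0 ≠ d 1) :
    coeff d q = 0 := by
  have := (mem_span_X_pow_triple_iff _ _ _ _).mp hq (linearCombination ℕ mulFstExp d)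
    (by simpa using h0) (by simpa using h0) (by simpa using h1)
  rwa [coeff_sub, coeff_aeval_monomial_one_of_injective linearCombination_mulFstExp_injective,
    coeff_aeval_monomial_one_of_notMem_range _ (linearCombination_mulFstExp_notMem_range hd),
    sub_zero] at this

noncomputable def diagonal (n : ℕ) (q : MvPolynomial (Fin 2) R) : Polynomial R :=
  ∑ k ∈ Finset.range (n + 1), Polynomial.monomial k (coeff (k • mulExp) q)

theorem coeff_diagonal (n : ℕ) (q : MvPolynomial (Fin 2) R) (k : ℕ) :
    (diagonal n q).coeff k = if k < n + 1 then coeff (k • mulExp) q else 0 := by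
  simp [diagonal, Polynomial.finsetSum_coeff, Polynomial.coeff_monomial]

theorem sub_aeval_diagonal_mem {n : ℕ} {q : MvPolynomial (Fin 2) R}
    (hq : ∀ d : Fin 2 →₀ ℕ, d 0 < n + 2 → d 1 < n + 1 → d 0 ≠ d 1 → coeff d q = 0) :
    q - Polynomial.aeval (monomial mulExp (1 : R)) (diagonal n q) ∈
      Ideal.span {X 0 ^ (n + 2), X 1 ^ (n + 1)} := by
  refine (mem_span_X_pow_pair_iff _ _ _).mpr fun d h0 h1 => ?_
  rw [coeff_sub, sub_eq_zero]
  by_cases hd : d 0 = d 1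
  · rw [eq_nsmul_mulExp hd, coeff_polynomial_aeval_monomial_one_nsmul mulExp_ne_zero,
      coeff_diagonal, if_pos (by omega)]
  · rw [coeff_polynomial_aeval_monomial_one_of_notMem_range _ (notMem_range_nsmul_mulExp hd),
      hq d h0 h1 hd]

end WeilDn

open MvPolynomial WeilDn

theorem weilDn_mult_equalizer {R : Type*} [CommRing R] (n : ℕ)
    (μ : WeilDn R n →ₐ[R] WeilTwo R n)
    (hμ : μ (Ideal.Quotient.mk _ (Polynomial.X : Polynomial R)) =
      Ideal.Quotient.mk _ (MvPolynomial.X 0 * MvPolynomial.X 1 : MvPolynomial (Fin 2) R))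
    (f₁ : WeilTwo R n →ₐ[R] WeilThree R n)
    (hf₁S : f₁ (Ideal.Quotient.mk _ (MvPolynomial.X 0 : MvPolynomial (Fin 2) R)) =
      Ideal.Quotient.mk _ (MvPolynomial.X 0 * MvPolynomial.X 1 : MvPolynomial (Fin 3) R))
    (hf₁T : f₁ (Ideal.Quotient.mk _ (MvPolynomial.X 1 : MvPolynomial (Fin 2) R)) =
      Ideal.Quotient.mk _ (MvPolynomial.X 2 : MvPolynomial (Fin 3) R))
    (f₂ : WeilTwo R n →ₐ[R] WeilThree R n)
    (hf₂S : f₂ (Ideal.Quotient.mk _ (MvPolynomial.X 0 : MvPolynomial (Fin 2) R)) =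
      Ideal.Quotient.mk _ (MvPolynomial.X 0 : MvPolynomial (Fin 3) R))
    (hf₂T : f₂ (Ideal.Quotient.mk _ (MvPolynomial.X 1 : MvPolynomial (Fin 2) R)) =
      Ideal.Quotient.mk _ (MvPolynomial.X 1 * MvPolynomial.X 2 : MvPolynomial (Fin 3) R)) :
    Function.Injective μ ∧ ∀ b : WeilTwo R n, f₁ b = f₂ b ↔ b ∈ μ.range := by
  have hμ' := Ideal.Quotient.polynomial_algHom_mk μ (a := monomial mulExp 1)
    (hμ.trans (congrArg _ (X_mul_X_eq_monomial 0 1)))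
  have hf₁' := Ideal.Quotient.mvPolynomial_algHom_mk f₁ (w := fun i => monomial (mulFstExp i) 1)
    (Fin.forall_fin_two.mpr ⟨hf₁S.trans (congrArg _ (X_mul_X_eq_monomial 0 1)), hf₁T⟩)
  have hf₂' := Ideal.Quotient.mvPolynomial_algHom_mk f₂ (w := fun i => monomial (mulSndExp i) 1)
    (Fin.forall_fin_two.mpr ⟨hf₂S, hf₂T.trans (congrArg _ (X_mul_X_eq_monomial 1 2))⟩)
  refine ⟨(injective_iff_map_eq_zero μ).mpr fun x hx => ?_, fun b => ⟨fun hb => ?_, ?_⟩⟩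
  · obtain ⟨p, rfl⟩ := Ideal.Quotient.mk_surjective x
    rw [hμ', Ideal.Quotient.eq_zero_iff_mem] at hx
    exact Ideal.Quotient.eq_zero_iff_mem.mpr
      (Ideal.mem_span_singleton.mpr (X_pow_dvd_of_aeval_mulExp_mem hx))
  · obtain ⟨q, rfl⟩ := Ideal.Quotient.mk_surjective b
    rw [hf₁', hf₂', Ideal.Quotient.eq] at hb
    refine (AlgHom.mem_range μ).mpr ⟨Ideal.Quotient.mk _ (diagonal n q), ?_⟩
    rw [hμ', Ideal.Quotient.eq, ← neg_mem_iff, neg_sub]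
    exact sub_aeval_diagonal_mem fun d h0 h1 hd => coeff_eq_zero_of_aeval_sub_aeval_mem hb h0 h1 hd
  · rintro ⟨x, rfl⟩
    have hcomp : f₁.comp μ = f₂.comp μ := Ideal.Quotient.algHom_ext _ <| Polynomial.algHom_ext <| by
      simp only [AlgHom.comp_apply, Ideal.Quotient.mkₐ_eq_mk, hμ, map_mul, hf₁S, hf₁T, hf₂S, hf₂T,
        mul_assoc]
    exact AlgHom.congr_fun hcomp x
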